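/- In a group generated by x₂, x₅, x₆ satisfying (x₂x₆)² = (x₆x₂)² and [x₂⁻¹x₆x₂, x₇] = e and the relation (x₂ · x₆⁻¹x₇x₆)² = (x₆⁻¹x₇x₆ · x₂)², it follows that (x₂x₇)² = (x₇x₂)². -/
import Mathlib


/-- Given `(x₂x₆)² = (x₆x₂)²`, `[x₂⁻¹x₆x₂, x₇] = e`, and
`(x₂·x₆⁻¹x₇x₆)² = (x₆⁻¹x₇x₆·x₂)²`, it follows that `(x₂x₇)² = (x₇x₂)²`. -/
theorem stmt_9 {G : Type*} [Group G] (x₂ x₆ x₇ : G)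
    (h26 : (x₂ * x₆) ^ 2 = (x₆ * x₂) ^ 2)
    (hcom : (x₂⁻¹ * x₆ * x₂) * x₇ = x₇ * (x₂⁻¹ * x₆ * x₂))
    (h7 : (x₂ * (x₆⁻¹ * x₇ * x₆)) ^ 2 = ((x₆⁻¹ * x₇ * x₆) * x₂) ^ 2) :
    (x₂ * x₇) ^ 2 = (x₇ * x₂) ^ 2 := by
  rw [pow_two, pow_two] at h26 h7 ⊢
  -- U = x₂⁻¹ * (x₆⁻¹*x₇*x₆) * x₂ satisfies (x₂U)² = (Ux₂)²
  have hU : x₂ * (x₂⁻¹ * (x₆⁻¹*x₇*x₆) * x₂) * (x₂ * (x₂⁻¹ * (x₆⁻¹*x₇*x₆) * x₂))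
      = (x₂⁻¹ * (x₆⁻¹*x₇*x₆) * x₂) * x₂ * ((x₂⁻¹ * (x₆⁻¹*x₇*x₆) * x₂) * x₂) := by
    calc x₂ * (x₂⁻¹ * (x₆⁻¹*x₇*x₆) * x₂) * (x₂ * (x₂⁻¹ * (x₆⁻¹*x₇*x₆) * x₂))
        = x₂⁻¹ * ((x₂ * (x₆⁻¹ * x₇ * x₆)) * (x₂ * (x₆⁻¹ * x₇ * x₆))) * x₂ := by group
      _ = x₂⁻¹ * (((x₆⁻¹ * x₇ * x₆) * x₂) * ((x₆⁻¹ * x₇ * x₆) * x₂)) * x₂ := by rw [h7]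
      _ = (x₂⁻¹ * (x₆⁻¹*x₇*x₆) * x₂) * x₂ * ((x₂⁻¹ * (x₆⁻¹*x₇*x₆) * x₂) * x₂) := by group
  -- conjugate hU by x₆*x₂ : (x₆x₂x₆⁻¹ · x₇)² = (x₇ · x₆x₂x₆⁻¹)²
  have hc' : (x₆*x₂*x₆⁻¹)*x₇*((x₆*x₂*x₆⁻¹)*x₇) = x₇*(x₆*x₂*x₆⁻¹)*(x₇*(x₆*x₂*x₆⁻¹)) := by
    calc (x₆*x₂*x₆⁻¹)*x₇*((x₆*x₂*x₆⁻¹)*x₇)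
        = (x₆*x₂) * (x₂ * (x₂⁻¹ * (x₆⁻¹*x₇*x₆) * x₂) * (x₂ * (x₂⁻¹ * (x₆⁻¹*x₇*x₆) * x₂))) * (x₆*x₂)⁻¹ := by
          group
      _ = (x₆*x₂) * ((x₂⁻¹ * (x₆⁻¹*x₇*x₆) * x₂) * x₂ * ((x₂⁻¹ * (x₆⁻¹*x₇*x₆) * x₂) * x₂)) * (x₆*x₂)⁻¹ := by
          rw [hU]
      _ = x₇*(x₆*x₂*x₆⁻¹)*(x₇*(x₆*x₂*x₆⁻¹)) := by group
  -- from h26 : x₆x₂x₆⁻¹ = x₂⁻¹x₆⁻¹x₂x₆x₂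
  have hc'' : x₆*x₂*x₆⁻¹ = x₂⁻¹*x₆⁻¹*x₂*x₆*x₂ := by
    calc x₆*x₂*x₆⁻¹ = (x₆*x₂)⁻¹ * ((x₆*x₂)*(x₆*x₂)) * x₆⁻¹ := by group
      _ = (x₆*x₂)⁻¹ * ((x₂*x₆)*(x₂*x₆)) * x₆⁻¹ := by rw [h26]
      _ = x₂⁻¹*x₆⁻¹*x₂*x₆*x₂ := by group
  rw [hc''] at hc'
  -- x₇ commutes with s := x₂⁻¹x₆x₂
  have hst' : (x₂⁻¹*x₆*x₂)*x₇*(x₂⁻¹*x₆*x₂)⁻¹ = x₇ := by rw [hcom]; group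
  -- conjugate hc' by s
  calc (x₂*x₇) * (x₂*x₇)
      = x₂*((x₂⁻¹*x₆*x₂)*x₇*(x₂⁻¹*x₆*x₂)⁻¹)*(x₂*((x₂⁻¹*x₆*x₂)*x₇*(x₂⁻¹*x₆*x₂)⁻¹)) := by
        rw [hst']
    _ = (x₂⁻¹*x₆*x₂) * ((x₂⁻¹*x₆⁻¹*x₂*x₆*x₂)*x₇*((x₂⁻¹*x₆⁻¹*x₂*x₆*x₂)*x₇)) * (x₂⁻¹*x₆*x₂)⁻¹ := by
        group
    _ = (x₂⁻¹*x₆*x₂) * (x₇*(x₂⁻¹*x₆⁻¹*x₂*x₆*x₂)*(x₇*(x₂⁻¹*x₆⁻¹*x₂*x₆*x₂))) * (x₂⁻¹*x₆*x₂)⁻¹ := by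
        rw [hc']
    _ = ((x₂⁻¹*x₆*x₂)*x₇*(x₂⁻¹*x₆*x₂)⁻¹)*x₂*(((x₂⁻¹*x₆*x₂)*x₇*(x₂⁻¹*x₆*x₂)⁻¹)*x₂) := by group
    _ = (x₇*x₂) * (x₇*x₂) := by rw [hst']
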